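/- arXiv:1610.00298 — 5 statements merged into one kernel-verified Lean document; each statement's English description precedes it below -/
import Mathlib

section
/- Let k be a field, d ≥ 1, and let R = ⊕_{a ∈ ℤ^d} R_a be a commutative k-algebra graded by ℤ^d which is an integral domain and satisfies dim_k R_a ≤ 1 for every a ∈ ℤ^d. Then S := {a ∈ ℤ^d : R_a ≠ 0} is an additive submonoid of ℤ^d, and R is isomorphic as a k-algebra to the monoid algebra k[S] of S over k, via an isomorphism that for each a ∈ S carries R_a onto the line spanned by the basis element of k[S] indexed by a. -/
/-!
For `a` in the support `S`, pick a nonzero `e a ∈ R_a`; everything hinges on choosing these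
compatibly, `e a * e b = e (a + b)`. The pairs `(x / y, deg x - deg y)` of nonzero homogeneous
`x, y` form a group extension of the subgroup generated by `S` by `kˣ`: a homogeneous fraction of
degree `0` is a scalar because `dim R_a ≤ 1`. A subgroup of `ℤ^d` is free, so the extension splits,
and a splitting gives the compatible choice. Then `χ^a ↦ e a` is injective because the pieces
`R_a` are independent, and surjective because each `R_a` is the line through `e a`.
-/

theorem Submodule.eq_span_singleton_of_rank_le_one {K V : Type*} [DivisionRing K]
    [AddCommGroup V] [Module K V] {s : Submodule K V} (hs : Module.rank K s ≤ 1) {v : V}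
    (hv : v ∈ s) (hv0 : v ≠ 0) : s = K ∙ v := by
  obtain ⟨v₀, hsv₀⟩ := (rank_submodule_le_one_iff' s).1 hs
  obtain ⟨c, rfl⟩ := Submodule.mem_span_singleton.1 (hsv₀ hv)
  have hc : c ≠ 0 := by rintro rfl; exact hv0 (zero_smul K v₀)
  rw [← Submodule.span_singleton_smul_eq (IsUnit.mk0 c hc)] at hsv₀
  exact le_antisymm hsv₀ ((Submodule.span_singleton_le_iff_mem _ _).2 hv)

theorem MonoidHom.exists_comp_eq_of_injective {M N P : Type*} [MulOneClass M] [MulOneClass N]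
    [MulOneClass P] (i : N →* P) (hi : Function.Injective i) (f : M →* P)
    (hf : ∀ m, f m ∈ Set.range i) : ∃ g : M →* N, i.comp g = f := by
  choose g hg using hf
  refine ⟨{ toFun := g, map_one' := hi ?_, map_mul' := fun m n => hi ?_ }, ?_⟩
  · simp [hg]
  · simp [hg]
  · ext m; exact hg m

namespace GradedAlgebra

section Support

variable {k R ι : Type*} [Field k] [CommRing R] [IsDomain R] [Algebra k R] [AddMonoid ι]
  [DecidableEq ι] (𝒜 : ι → Submodule k R) [GradedAlgebra 𝒜]

def supportSubmonoid : AddSubmonoid ι where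
  carrier := {a | 𝒜 a ≠ ⊥}
  zero_mem' := (Submodule.ne_bot_iff _).2 ⟨1, SetLike.one_mem_graded 𝒜, one_ne_zero⟩
  add_mem' {a b} ha hb := by
    obtain ⟨x, hx, hx0⟩ := (Submodule.ne_bot_iff _).1 ha
    obtain ⟨y, hy, hy0⟩ := (Submodule.ne_bot_iff _).1 hb
    exact (Submodule.ne_bot_iff _).2 ⟨x * y, SetLike.mul_mem_graded hx hy, mul_ne_zero hx0 hy0⟩

theorem mem_supportSubmonoid {a : ι} : a ∈ supportSubmonoid 𝒜 ↔ 𝒜 a ≠ ⊥ := Iff.rfl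

end Support

section Fractions

variable {k R ι : Type*} [Field k] [CommRing R] [IsDomain R] [Algebra k R] [AddCommGroup ι]
  [DecidableEq ι] (𝒜 : ι → Submodule k R) [GradedAlgebra 𝒜]

local notation "K" => FractionRing R

/-- The degree of homogeneous fractions `x / y`, as a relation (graph) rather than a function, so
that its well-definedness never has to be proved. -/
def homogeneousFractions : AddSubgroup (Additive Kˣ × ι) where
  carrier := {p | ∃ b c : ι, ∃ x ∈ 𝒜 b, ∃ y ∈ 𝒜 c, x ≠ 0 ∧ y ≠ 0 ∧
    ((p.1.toMul : Kˣ) : K) = algebraMap R K x / algebraMap R K y ∧ p.2 = b - c}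
  zero_mem' := ⟨0, 0, 1, SetLike.one_mem_graded 𝒜, 1, SetLike.one_mem_graded 𝒜, one_ne_zero,
    one_ne_zero, by simp, by simp⟩
  add_mem' := by
    rintro p q ⟨b, c, x, hx, y, hy, hx0, hy0, hp, hpd⟩
      ⟨b', c', x', hx', y', hy', hx0', hy0', hq, hqd⟩
    refine ⟨b + b', c + c', x * x', SetLike.mul_mem_graded hx hx', y * y',
      SetLike.mul_mem_graded hy hy', mul_ne_zero hx0 hx0', mul_ne_zero hy0 hy0', ?_, ?_⟩
    · simp only [Prod.fst_add, toMul_add, Units.val_mul, hp, hq, map_mul, div_mul_div_comm]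
    · simp only [Prod.snd_add, hpd, hqd]; abel
  neg_mem' := by
    rintro p ⟨b, c, x, hx, y, hy, hx0, hy0, hp, hpd⟩
    refine ⟨c, b, y, hy, x, hx, hy0, hx0, ?_, ?_⟩
    · simp only [Prod.fst_neg, toMul_neg, Units.val_inv_eq_inv_val, hp, inv_div]
    · simp only [Prod.snd_neg, hpd, neg_sub]

theorem mk_mem_homogeneousFractions {a : ι} {x : R} (hx : x ∈ 𝒜 a) (hx0 : x ≠ 0) {u : Kˣ}
    (hu : (u : K) = algebraMap R K x) : (Additive.ofMul u, a) ∈ homogeneousFractions 𝒜 :=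
  ⟨a, 0, x, hx, 1, SetLike.one_mem_graded 𝒜, hx0, one_ne_zero, by simpa using hu, by simp⟩

theorem map_snd_homogeneousFractions :
    (homogeneousFractions 𝒜).map (AddMonoidHom.snd _ _) =
      AddSubgroup.closure (supportSubmonoid 𝒜 : Set ι) := by
  apply le_antisymm
  · rintro _ ⟨p, ⟨b, c, x, hx, y, hy, hx0, hy0, -, hpd⟩, rfl⟩
    rw [AddMonoidHom.coe_snd, hpd]
    exact sub_mem
      (AddSubgroup.subset_closure ((Submodule.ne_bot_iff _).2 ⟨x, hx, hx0⟩))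
      (AddSubgroup.subset_closure ((Submodule.ne_bot_iff _).2 ⟨y, hy, hy0⟩))
  · rw [AddSubgroup.closure_le]
    intro a ha
    obtain ⟨x, hx, hx0⟩ := (Submodule.ne_bot_iff _).1 ha
    have hxK : algebraMap R K x ≠ 0 := (map_ne_zero_iff _ (IsFractionRing.injective R K)).2 hx0
    exact ⟨_, mk_mem_homogeneousFractions 𝒜 hx hx0 (Units.val_mk0 hxK), rfl⟩

theorem exists_algebraMap_eq_of_mem_homogeneousFractions
    (hone : ∀ a, Module.rank k (𝒜 a) ≤ 1) {p : Additive Kˣ × ι}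
    (hp : p ∈ homogeneousFractions 𝒜) (hp0 : p.2 = 0) :
    ∃ c : k, (p.1.toMul : K) = algebraMap k K c := by
  obtain ⟨b, c, x, hx, y, hy, -, hy0, hp, hbc⟩ := hp
  obtain rfl : b = c := sub_eq_zero.1 (hbc.symm.trans hp0)
  rw [Submodule.eq_span_singleton_of_rank_le_one (hone b) hy hy0] at hx
  obtain ⟨r, rfl⟩ := Submodule.mem_span_singleton.1 hx
  have hyK : algebraMap R K y ≠ 0 := (map_ne_zero_iff _ (IsFractionRing.injective R K)).2 hy0
  refine ⟨r, ?_⟩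
  rw [hp, Algebra.smul_def, map_mul, ← IsScalarTower.algebraMap_apply, mul_div_cancel_right₀ _ hyK]

theorem exists_mem_algebraMap_eq_of_mem_homogeneousFractions
    (hone : ∀ a, Module.rank k (𝒜 a) ≤ 1) {p : Additive Kˣ × ι}
    (hp : p ∈ homogeneousFractions 𝒜) (hpS : p.2 ∈ supportSubmonoid 𝒜) :
    ∃ r ∈ 𝒜 p.2, algebraMap R K r = (p.1.toMul : K) := by
  obtain ⟨x, hx, hx0⟩ := (Submodule.ne_bot_iff _).1 hpS
  have hxK : algebraMap R K x ≠ 0 := (map_ne_zero_iff _ (IsFractionRing.injective R K)).2 hx0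
  have hq := mk_mem_homogeneousFractions 𝒜 hx hx0 (Units.val_mk0 hxK)
  obtain ⟨c, hc⟩ := exists_algebraMap_eq_of_mem_homogeneousFractions 𝒜 hone
    (sub_mem hp hq) (sub_self p.2)
  refine ⟨c • x, Submodule.smul_mem _ c hx, ?_⟩
  simp only [Prod.fst_sub, toMul_sub, toMul_ofMul, Units.val_div_eq_div_val, Units.val_mk0] at hc
  rw [Algebra.smul_def, map_mul, ← IsScalarTower.algebraMap_apply, ← hc, div_mul_cancel₀ _ hxK]

theorem exists_section_homogeneousFractions [Module.Finite ℤ ι] [Module.IsTorsionFree ℤ ι] :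
    ∃ σ : supportSubmonoid 𝒜 →+ homogeneousFractions 𝒜,
      ∀ a, (σ a : Additive Kˣ × ι).2 = a := by
  set T := homogeneousFractions 𝒜
  set G := Submodule.span ℤ (supportSubmonoid 𝒜 : Set ι)
  have hG : ∀ g, g ∈ G ↔ g ∈ T.map (AddMonoidHom.snd _ _) := by
    intro g
    rw [map_snd_homogeneousFractions, ← Submodule.span_int_eq_addSubgroupClosure]
    rfl
  let deg : T.toIntSubmodule →ₗ[ℤ] G := LinearMap.codRestrict G
    ((AddMonoidHom.snd (Additive Kˣ) ι).toIntLinearMap.comp T.toIntSubmodule.subtype)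
    fun p => (hG p.1.2).2 ⟨p.1, p.2, rfl⟩
  have hdeg : Function.Surjective deg := by
    rintro ⟨g, hg⟩
    obtain ⟨p, hp, rfl⟩ := (hG g).1 hg
    exact ⟨⟨p, hp⟩, rfl⟩
  -- `G` is a finitely generated torsion-free `ℤ`-module, hence free, hence projective.
  obtain ⟨σ, hσ⟩ := Module.projective_lifting_property deg LinearMap.id hdeg
  refine ⟨σ.toAddMonoidHom.comp ((supportSubmonoid 𝒜).subtype.codRestrict G.toAddSubmonoid
    (fun a => Submodule.subset_span a.2)), fun a => ?_⟩
  exact congrArg Subtype.val (LinearMap.congr_fun hσ _)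

theorem exists_monoidHom_mem_ne_zero [Module.Finite ℤ ι] [Module.IsTorsionFree ℤ ι]
    (hone : ∀ a, Module.rank k (𝒜 a) ≤ 1) :
    ∃ e : Multiplicative (supportSubmonoid 𝒜) →* R,
      ∀ a : supportSubmonoid 𝒜, e (.ofAdd a) ∈ 𝒜 a ∧ e (.ofAdd a) ≠ 0 := by
  obtain ⟨σ, hσ⟩ := exists_section_homogeneousFractions 𝒜
  let f : Multiplicative (supportSubmonoid 𝒜) →* K := (Units.coeHom K).comp
    (AddMonoidHom.toMultiplicativeLeft
      ((AddMonoidHom.fst _ _).comp ((homogeneousFractions 𝒜).subtype.comp σ)))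
  have hf : ∀ a : supportSubmonoid 𝒜, ∃ r ∈ 𝒜 a, algebraMap R K r = f (.ofAdd a) := by
    intro a
    have := exists_mem_algebraMap_eq_of_mem_homogeneousFractions 𝒜 hone (σ a).2
      (by rw [hσ]; exact a.2)
    rwa [hσ] at this
  obtain ⟨e, he⟩ := MonoidHom.exists_comp_eq_of_injective (algebraMap R K : R →* K)
    (IsFractionRing.injective R K) f fun m => (hf m.toAdd).imp fun r hr => hr.2
  refine ⟨e, fun a => ?_⟩
  obtain ⟨r, hr, hrf⟩ := hf a
  have her : e (.ofAdd a) = r := IsFractionRing.injective R K (by rw [hrf, ← he]; rfl)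
  refine ⟨her ▸ hr, fun h0 => ?_⟩
  have : f (.ofAdd a) = 0 := by rw [← hrf, ← her, h0, map_zero]
  exact Units.ne_zero _ this

end Fractions

section MonoidAlgebra

open AddMonoidAlgebra

variable {k R ι : Type*} [Field k] [CommRing R] [Algebra k R] [AddMonoid ι]
  [DecidableEq ι] (𝒜 : ι → Submodule k R) [GradedAlgebra 𝒜]

theorem lift_injective {M : AddSubmonoid ι} {e : Multiplicative M →* R}
    (he : ∀ a : M, e (.ofAdd a) ∈ 𝒜 a) (he0 : ∀ a, e (.ofAdd a) ≠ 0) :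
    Function.Injective (lift k R M e) := by
  have hind : LinearIndependent k fun a : M => e (.ofAdd a) :=
    ((DirectSum.Decomposition.isInternal 𝒜).submodule_iSupIndep.comp
      Subtype.val_injective).linearIndependent _ he he0
  have hlift : (lift k R M e).toLinearMap = (basis M k).constr k fun a => e (.ofAdd a) :=
    (basis M k).ext fun a => by
      rw [Module.Basis.constr_basis, AlgHom.toLinearMap_apply, basis_apply, lift_single, one_smul]
  rw [← AlgHom.coe_toLinearMap, hlift]
  exact (basis M k).injective_constr_of_linearIndependent hind

theorem lift_surjective [IsDomain R] (hone : ∀ a, Module.rank k (𝒜 a) ≤ 1)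
    {e : Multiplicative (supportSubmonoid 𝒜) →* R}
    (he : ∀ a : supportSubmonoid 𝒜, e (.ofAdd a) ∈ 𝒜 a) (he0 : ∀ a, e (.ofAdd a) ≠ 0) :
    Function.Surjective (lift k R _ e) := by
  have hle : ∀ a, 𝒜 a ≤ Subalgebra.toSubmodule (lift k R _ e).range := by
    intro a
    by_cases ha : a ∈ supportSubmonoid 𝒜
    · rw [Submodule.eq_span_singleton_of_rank_le_one (hone a) (he ⟨a, ha⟩) (he0 ⟨a, ha⟩),
        Submodule.span_singleton_le_iff_mem]
      exact ⟨single ⟨a, ha⟩ 1, by simp [lift_single]⟩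
    · rw [(mem_supportSubmonoid 𝒜).not_left.1 ha]
      exact bot_le
  intro x
  have hx : x ∈ ⨆ a, 𝒜 a := by
    rw [(DirectSum.Decomposition.isInternal 𝒜).submodule_iSup_eq_top]; trivial
  exact iSup_le hle hx

end MonoidAlgebra

end GradedAlgebra

theorem stmt_1_general {k R : Type} [Field k] [CommRing R] [IsDomain R] [Algebra k R]
    {d : ℕ}
    (𝒜 : (Fin d → ℤ) → Submodule k R) [GradedAlgebra 𝒜]
    (hone : ∀ a : Fin d → ℤ, Module.rank k ↥(𝒜 a) ≤ 1) :
    ∃ S : AddSubmonoid (Fin d → ℤ),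
      (S : Set (Fin d → ℤ)) = {a : Fin d → ℤ | 𝒜 a ≠ ⊥} ∧
      ∃ φ : R ≃ₐ[k] AddMonoidAlgebra k ↥S,
        ∀ a : ↥S, ⇑φ '' ((𝒜 ↑a : Submodule k R) : Set R) =
          ((Submodule.span k {(AddMonoidAlgebra.single a (1 : k) : AddMonoidAlgebra k ↥S)} :
            Submodule k (AddMonoidAlgebra k ↥S)) : Set (AddMonoidAlgebra k ↥S)) := by
  obtain ⟨e, he⟩ := GradedAlgebra.exists_monoidHom_mem_ne_zero 𝒜 hone
  let ψ := AlgEquiv.ofBijective (AddMonoidAlgebra.lift k R _ e)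
    ⟨GradedAlgebra.lift_injective 𝒜 (fun a => (he a).1) (fun a => (he a).2),
      GradedAlgebra.lift_surjective 𝒜 hone (fun a => (he a).1) (fun a => (he a).2)⟩
  refine ⟨GradedAlgebra.supportSubmonoid 𝒜, rfl, ψ.symm, fun a => ?_⟩
  have hψ : ψ.symm (e (.ofAdd a)) = AddMonoidAlgebra.single a 1 := ψ.symm_apply_eq.2 (by
    show _ = AddMonoidAlgebra.lift k R _ e (AddMonoidAlgebra.single a 1)
    rw [AddMonoidAlgebra.lift_single, one_smul])
  rw [Submodule.eq_span_singleton_of_rank_le_one (hone a) (he a).1 (he a).2, ← hψ]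
  calc ⇑ψ.symm '' (k ∙ e (.ofAdd a) : Set R)
      = ((k ∙ e (.ofAdd a)).map ψ.symm.toLinearMap : Set _) := rfl
    _ = _ := by rw [Submodule.map_span, Set.image_singleton]; rfl

/-- **Graded domains with one-dimensional pieces are monoid algebras**
(Proposition `prop-grA-semigp-algebra`).  If `R` is a `ℤ^d`-graded `k`-algebra which is a
domain and all of whose graded pieces have dimension at most `1`, then
`S = {a : 𝒜 a ≠ ⊥}` is an additive submonoid of `ℤ^d` and `R ≅ k[S]` via an isomorphism
carrying each graded piece `R_a` (for `a ∈ S`) onto the line spanned by the basis element of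
`k[S]` indexed by `a`. -/
theorem stmt_1 {k R : Type} [Field k] [CommRing R] [IsDomain R] [Algebra k R]
    {d : ℕ} (hd : 1 ≤ d)
    (𝒜 : (Fin d → ℤ) → Submodule k R) [GradedAlgebra 𝒜]
    (hone : ∀ a : Fin d → ℤ, Module.rank k ↥(𝒜 a) ≤ 1) :
    ∃ S : AddSubmonoid (Fin d → ℤ),
      (S : Set (Fin d → ℤ)) = {a : Fin d → ℤ | 𝒜 a ≠ ⊥} ∧
      ∃ φ : R ≃ₐ[k] AddMonoidAlgebra k ↥S,
        ∀ a : ↥S, ⇑φ '' ((𝒜 ↑a : Submodule k R) : Set R) =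
          ((Submodule.span k {(AddMonoidAlgebra.single a (1 : k) : AddMonoidAlgebra k ↥S)} :
            Submodule k (AddMonoidAlgebra k ↥S)) : Set (AddMonoidAlgebra k ↥S)) :=
  stmt_1_general 𝒜 hone
end

section
/- Let A be a commutative k-algebra that is an integral domain, (Γ,≻) a linearly ordered abelian group, v : A∖{0} → Γ a valuation over k, and B = {b_1,…,b_n} ⊆ A∖{0} a finite Khovanskii basis for (A,v). Assume the value semigroup S(A,v) is maximum well-ordered, i.e. there is no infinite strictly ≻-increasing sequence in S(A,v). Then for every nonzero f ∈ A there exists a polynomial p = Σ_α c_α x^α ∈ k[x_1,…,x_n] with f = p(b_1,…,b_n) and v(f) = min_≻{Σ_{j=1}^n α_j·v(b_j) : c_α ≠ 0}. In particular B generates A as a k-algebra, and for every nonzero f, v(f) is the ≻-maximum, over all polynomials p with p(b_1,…,b_n) = f, of min_≻{Σ_j α_j·v(b_j) : c_α ≠ 0}. -/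
/-!
Subduction: given `f ≠ 0`, the Khovanskii property supplies `p` whose monomials all have weight
`v f` and such that the remainder `f - p(b)` is zero or of strictly larger value. Recursing on the
remainder terminates because values only increase and the value semigroup admits no infinite
increasing sequence; the monomials of the remainder's representation have weights `> v f`, so
they cannot cancel those of `p`, and the minimum weight of the sum is `v f`. Conversely, in any
`f = q(b)` the valuation of the sum is at least that of some term, which is the weight of its
monomial.
-/

open MvPolynomial

section Valuation

variable {A Γ : Type*} [CommRing A] [IsDomain A] [AddCancelCommMonoid Γ] {v : A → Γ}

theorem val_one_of_map_mul (hmul : ∀ f g : A, f ≠ 0 → g ≠ 0 → v (f * g) = v f + v g) :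
    v 1 = 0 := by
  simpa [one_mul] using hmul 1 1 one_ne_zero one_ne_zero

theorem val_prod_of_map_mul (hmul : ∀ f g : A, f ≠ 0 → g ≠ 0 → v (f * g) = v f + v g)
    {ι : Type*} (s : Finset ι) {x : ι → A} (hx : ∀ i ∈ s, x i ≠ 0) :
    v (∏ i ∈ s, x i) = ∑ i ∈ s, v (x i) := by
  classical
  induction s using Finset.induction with
  | empty => simpa using val_one_of_map_mul hmul
  | insert a s ha ih =>
    rw [Finset.prod_insert ha, Finset.sum_insert ha,
      hmul _ _ (hx a (s.mem_insert_self a)) (Finset.prod_ne_zero_iff.2 fun i hi => hx i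
        (Finset.mem_insert_of_mem hi)),
      ih fun i hi => hx i (Finset.mem_insert_of_mem hi)]

theorem val_pow_of_map_mul (hmul : ∀ f g : A, f ≠ 0 → g ≠ 0 → v (f * g) = v f + v g)
    {x : A} (hx : x ≠ 0) (m : ℕ) : v (x ^ m) = m • v x := by
  simpa using val_prod_of_map_mul hmul (Finset.range m) (x := fun _ => x) fun _ _ => hx

theorem val_algebraMap_mul_prod_pow {k σ : Type*} [Field k] [Algebra k A] [Fintype σ]
    (hmul : ∀ f g : A, f ≠ 0 → g ≠ 0 → v (f * g) = v f + v g)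
    (hscal : ∀ (c : k) (f : A), c ≠ 0 → f ≠ 0 → v (algebraMap k A c * f) = v f)
    {b : σ → A} (hb0 : ∀ j, b j ≠ 0) {c : k} (hc : c ≠ 0) (α : σ →₀ ℕ) :
    v (algebraMap k A c * ∏ j, b j ^ α j) = ∑ j, α j • v (b j) := by
  rw [hscal c _ hc (Finset.prod_ne_zero_iff.2 fun j _ => pow_ne_zero _ (hb0 j)),
    val_prod_of_map_mul hmul _ fun j _ => pow_ne_zero _ (hb0 j)]
  exact Finset.sum_congr rfl fun j _ => val_pow_of_map_mul hmul (hb0 j) _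

end Valuation

theorem exists_val_le_val_sum {A Γ ι : Type*} [AddCommMonoid A] [LinearOrder Γ] {v : A → Γ}
    (hadd : ∀ f g : A, f ≠ 0 → g ≠ 0 → f + g ≠ 0 → min (v f) (v g) ≤ v (f + g))
    (s : Finset ι) {t : ι → A} (ht : ∀ i ∈ s, t i ≠ 0) (hsum : ∑ i ∈ s, t i ≠ 0) :
    ∃ i ∈ s, v (t i) ≤ v (∑ i ∈ s, t i) := by
  classical
  induction s using Finset.induction with
  | empty => simp at hsum
  | insert a s ha ih =>
    rw [Finset.sum_insert ha] at hsum ⊢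
    by_cases hrest : ∑ i ∈ s, t i = 0
    · exact ⟨a, s.mem_insert_self a, by rw [hrest, add_zero]⟩
    obtain ⟨i, hi, hvi⟩ := ih (fun i hi => ht i (Finset.mem_insert_of_mem hi)) hrest
    have hmin := hadd _ _ (ht a (s.mem_insert_self a)) hrest hsum
    rcases le_total (v (t a)) (v (∑ i ∈ s, t i)) with h | h
    · exact ⟨a, s.mem_insert_self a, by rwa [min_eq_left h] at hmin⟩
    · exact ⟨i, Finset.mem_insert_of_mem hi, hvi.trans (by rwa [min_eq_right h] at hmin)⟩

theorem exists_mem_support_weight_le_val {k A Γ σ : Type*} [Field k] [CommRing A] [IsDomain A]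
    [Algebra k A] [AddCancelCommMonoid Γ] [LinearOrder Γ] [Fintype σ] {v : A → Γ}
    (hadd : ∀ f g : A, f ≠ 0 → g ≠ 0 → f + g ≠ 0 → min (v f) (v g) ≤ v (f + g))
    (hmul : ∀ f g : A, f ≠ 0 → g ≠ 0 → v (f * g) = v f + v g)
    (hscal : ∀ (c : k) (f : A), c ≠ 0 → f ≠ 0 → v (algebraMap k A c * f) = v f)
    {b : σ → A} (hb0 : ∀ j, b j ≠ 0) {q : MvPolynomial σ k} (hq : aeval b q ≠ 0) :
    ∃ α ∈ q.support, ∑ j, α j • v (b j) ≤ v (aeval b q) := by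
  have hexp : aeval b q = ∑ α ∈ q.support, algebraMap k A (q.coeff α) * ∏ j, b j ^ α j := by
    rw [aeval_def, eval₂_eq']
  have hterm : ∀ α ∈ q.support, algebraMap k A (q.coeff α) * ∏ j, b j ^ α j ≠ 0 :=
    fun α hα => mul_ne_zero ((map_ne_zero _).2 (mem_support_iff.1 hα))
      (Finset.prod_ne_zero_iff.2 fun j _ => pow_ne_zero _ (hb0 j))
  obtain ⟨α, hα, hle⟩ := exists_val_le_val_sum hadd q.support hterm (hexp ▸ hq)
  refine ⟨α, hα, ?_⟩
  rw [← val_algebraMap_mul_prod_pow hmul hscal hb0 (mem_support_iff.1 hα), hexp]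
  exact hle

theorem Set.wellFoundedOn_gt_of_not_exists_strictMono {Γ : Type*} [Preorder Γ] {S : Set Γ}
    (h : ¬∃ s : ℕ → Γ, StrictMono s ∧ ∀ i, s i ∈ S) : S.WellFoundedOn (· > ·) :=
  Set.wellFoundedOn_iff_no_descending_seq.2 fun f hf =>
    h ⟨f, strictMono_nat_of_lt_succ fun n => f.map_rel_iff.2 n.lt_succ_self, hf⟩

theorem MvPolynomial.isLeast_weight_image_support_add {σ R Γ : Type*} [CommSemiring R]
    [LinearOrder Γ] {w : (σ →₀ ℕ) → Γ} {γ : Γ} {p q : MvPolynomial σ R} (hp0 : p ≠ 0)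
    (hp : ∀ α ∈ p.support, w α = γ) (hq : ∀ α ∈ q.support, γ < w α) :
    IsLeast (w '' (p + q).support) γ := by
  classical
  have hdisj : Disjoint p.support q.support :=
    Finset.disjoint_left.2 fun α hαp hαq => (hq α hαq).ne (hp α hαp).symm
  rw [show (p + q).support = p.support ∪ q.support from Finsupp.support_add_eq hdisj]
  obtain ⟨α, hα⟩ := support_nonempty.2 hp0
  refine ⟨⟨α, Finset.mem_union_left _ hα, hp α hα⟩, ?_⟩
  rintro _ ⟨β, hβ, rfl⟩
  rcases Finset.mem_union.1 hβ with hβ | hβ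
  · exact (hp β hβ).ge
  · exact (hq β hβ).le

def IsKhovanskiiBasis (k : Type*) {A Γ σ : Type*} [CommSemiring k] [CommRing A] [Algebra k A]
    [AddCommMonoid Γ] [LT Γ] [Fintype σ] (v : A → Γ) (b : σ → A) : Prop :=
  ∀ f : A, f ≠ 0 → ∃ p : MvPolynomial σ k,
    (∀ α ∈ p.support, (∑ j, α j • v (b j)) = v f) ∧
    (f = aeval b p ∨ v f < v (f - aeval b p))

theorem IsKhovanskiiBasis.exists_aeval_eq {k A Γ σ : Type*} [CommSemiring k] [CommRing A]
    [Algebra k A] [AddCommMonoid Γ] [LinearOrder Γ] [Fintype σ] {v : A → Γ} {b : σ → A}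
    (hKB : IsKhovanskiiBasis k v b) (hwf : (v '' {f | f ≠ 0}).WellFoundedOn (· > ·))
    {f : A} (hf : f ≠ 0) :
    ∃ p : MvPolynomial σ k, f = aeval b p ∧
      (∀ α ∈ p.support, v f ≤ ∑ j, α j • v (b j)) ∧
      ∃ α ∈ p.support, v f = ∑ j, α j • v (b j) := by
  apply (Set.wellFoundedOn_image.1 hwf).induction hf
  intro f (hf : f ≠ 0) ih
  obtain ⟨p, hpw, hp⟩ := hKB f hf
  have hp0 : p ≠ 0 := by
    rintro rfl
    simp [hf] at hp
  obtain ⟨q, hq, hqw⟩ : ∃ q : MvPolynomial σ k, aeval b q = f - aeval b p ∧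
      ∀ α ∈ q.support, v f < ∑ j, α j • v (b j) := by
    by_cases hr : f - aeval b p = 0
    · exact ⟨0, by rw [hr, map_zero], by simp⟩
    have hlt := hp.resolve_left fun h => hr (sub_eq_zero.2 h)
    obtain ⟨q, hq, hqw, -⟩ := ih _ hr hlt
    exact ⟨q, hq.symm, fun α hα => hlt.trans_le (hqw α hα)⟩
  obtain ⟨⟨α, hα, heq⟩, hle⟩ := isLeast_weight_image_support_add hp0 hpw hqw
  exact ⟨p + q, by rw [map_add, hq, add_sub_cancel], fun β hβ => hle ⟨β, hβ, rfl⟩, α, hα,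
    heq.symm⟩

theorem stmt_3_general {k A : Type} [Field k] [CommRing A] [IsDomain A] [Algebra k A]
    {Γ : Type} [AddCommGroup Γ] [LinearOrder Γ]
    (v : A → Γ)
    (hadd : ∀ f g : A, f ≠ 0 → g ≠ 0 → f + g ≠ 0 → min (v f) (v g) ≤ v (f + g))
    (hmul : ∀ f g : A, f ≠ 0 → g ≠ 0 → v (f * g) = v f + v g)
    (hscal : ∀ (c : k) (f : A), c ≠ 0 → f ≠ 0 → v (algebraMap k A c * f) = v f)
    {n : ℕ} (b : Fin n → A) (hb0 : ∀ j, b j ≠ 0)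
    -- `B = {b 0, …, b (n-1)}` is a Khovanskii basis for `(A, v)`:
    (hKB : ∀ f : A, f ≠ 0 → ∃ p : MvPolynomial (Fin n) k,
        (∀ α ∈ p.support, (∑ j, α j • v (b j)) = v f) ∧
        (f = MvPolynomial.aeval b p ∨ v f < v (f - MvPolynomial.aeval b p)))
    -- the value semigroup is maximum well-ordered:
    (hwo : ¬ ∃ s : ℕ → Γ, StrictMono s ∧ ∀ i : ℕ, ∃ f : A, f ≠ 0 ∧ v f = s i) :
    (∀ f : A, f ≠ 0 → ∃ p : MvPolynomial (Fin n) k,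
        f = MvPolynomial.aeval b p ∧
        (∀ α ∈ p.support, v f ≤ ∑ j, α j • v (b j)) ∧
        (∃ α ∈ p.support, v f = ∑ j, α j • v (b j))) ∧
    Algebra.adjoin k (Set.range b) = ⊤ ∧
    (∀ f : A, f ≠ 0 → ∀ q : MvPolynomial (Fin n) k, MvPolynomial.aeval b q = f →
        ∃ α ∈ q.support, (∑ j, α j • v (b j)) ≤ v f) := by
  have hwf : (v '' {f | f ≠ 0}).WellFoundedOn (· > ·) :=
    Set.wellFoundedOn_gt_of_not_exists_strictMono hwo
  have hrepr := fun f (hf : f ≠ 0) => IsKhovanskiiBasis.exists_aeval_eq (k := k) hKB hwf hf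
  refine ⟨hrepr, ?_, ?_⟩
  · rw [Algebra.adjoin_range_eq_range_aeval, AlgHom.range_eq_top]
    intro f
    by_cases hf : f = 0
    · exact ⟨0, by rw [hf, map_zero]⟩
    · obtain ⟨p, hp, -⟩ := hrepr f hf
      exact ⟨p, hp.symm⟩
  · rintro f hf q rfl
    exact exists_mem_support_weight_le_val hadd hmul hscal hb0 hf

/-- **Termination of the subduction algorithm** (Proposition `prop-subduction`).
Let `v` be a valuation on `A` over `k` with finite Khovanskii basis `b₁, …, bₙ`, and suppose
the value semigroup is maximum well-ordered (no infinite strictly increasing sequence).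
Then every nonzero `f ∈ A` can be written as `f = p(b₁,…,bₙ)` with
`v f = min {Σ αⱼ • v bⱼ : c_α ≠ 0}`; in particular `B` generates `A` as a `k`-algebra and
`v f` is the maximum over all polynomial expressions for `f` of this minimum. -/
theorem stmt_3 {k A : Type} [Field k] [CommRing A] [IsDomain A] [Algebra k A]
    {Γ : Type} [AddCommGroup Γ] [LinearOrder Γ] [IsOrderedAddMonoid Γ]
    (v : A → Γ)
    (hadd : ∀ f g : A, f ≠ 0 → g ≠ 0 → f + g ≠ 0 → min (v f) (v g) ≤ v (f + g))
    (hmul : ∀ f g : A, f ≠ 0 → g ≠ 0 → v (f * g) = v f + v g)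
    (hscal : ∀ (c : k) (f : A), c ≠ 0 → f ≠ 0 → v (algebraMap k A c * f) = v f)
    {n : ℕ} (b : Fin n → A) (hb0 : ∀ j, b j ≠ 0)
    -- `B = {b 0, …, b (n-1)}` is a Khovanskii basis for `(A, v)`:
    (hKB : ∀ f : A, f ≠ 0 → ∃ p : MvPolynomial (Fin n) k,
        (∀ α ∈ p.support, (∑ j, α j • v (b j)) = v f) ∧
        (f = MvPolynomial.aeval b p ∨ v f < v (f - MvPolynomial.aeval b p)))
    -- the value semigroup is maximum well-ordered:
    (hwo : ¬ ∃ s : ℕ → Γ, StrictMono s ∧ ∀ i : ℕ, ∃ f : A, f ≠ 0 ∧ v f = s i) :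
    (∀ f : A, f ≠ 0 → ∃ p : MvPolynomial (Fin n) k,
        f = MvPolynomial.aeval b p ∧
        (∀ α ∈ p.support, v f ≤ ∑ j, α j • v (b j)) ∧
        (∃ α ∈ p.support, v f = ∑ j, α j • v (b j))) ∧
    Algebra.adjoin k (Set.range b) = ⊤ ∧
    (∀ f : A, f ≠ 0 → ∀ q : MvPolynomial (Fin n) k, MvPolynomial.aeval b q = f →
        ∃ α ∈ q.support, (∑ j, α j • v (b j)) ≤ v f) :=
  stmt_3_general v hadd hmul hscal b hb0 hKB hwo
end

section
/- Let I ⊆ k[x_1,…,x_n] be an ideal and M ∈ ℚ^{r×n} (with ℚ^r carrying the lexicographic order ≻). Every nonzero h ∈ in_M(I) can be written as h = Σ_{i=1}^s in_M(f_i) for nonzero f_1,…,f_s ∈ I such that the initial forms in_M(f_1),…,in_M(f_s) are M-homogeneous of pairwise distinct degrees. -/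
open MvPolynomial

instance finWellFoundedLT {r : ℕ} : WellFoundedLT (Fin r) := Finite.to_wellFoundedLT

/-- The initial form of a polynomial with respect to a comparison `le` on exponent vectors:
the sum of the terms of `f` whose exponent is `le`-minimal in the support of `f`. -/
noncomputable def initialForm {k : Type} [Field k] {n : ℕ}
    (le : (Fin n →₀ ℕ) → (Fin n →₀ ℕ) → Prop)
    (f : MvPolynomial (Fin n) k) : MvPolynomial (Fin n) k :=
  letI := Classical.decPred fun α : Fin n →₀ ℕ => ∀ β ∈ f.support, le α β
  ∑ α ∈ f.support.filter (fun α => ∀ β ∈ f.support, le α β),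
    monomial α (MvPolynomial.coeff α f)

/-- The initial ideal of `I`: the ideal generated by initial forms of nonzero elements of `I`. -/
noncomputable def initialIdeal {k : Type} [Field k] {n : ℕ}
    (le : (Fin n →₀ ℕ) → (Fin n →₀ ℕ) → Prop)
    (I : Ideal (MvPolynomial (Fin n) k)) : Ideal (MvPolynomial (Fin n) k) :=
  Ideal.span {g | ∃ f ∈ I, f ≠ 0 ∧ g = initialForm le f}

/-- The weight `Mα ∈ ℚ^r` of an exponent vector `α` under the weighting matrix `M`. -/
def mwt {n r : ℕ} (M : Matrix (Fin r) (Fin n) ℚ) (α : Fin n →₀ ℕ) : Fin r → ℚ :=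
  fun i => ∑ j, M i j * (α j : ℚ)

/-- Comparison of exponents by `M`-weight, in the lexicographic order on `ℚ^r`. -/
def mLe {n r : ℕ} (M : Matrix (Fin r) (Fin n) ℚ) : (Fin n →₀ ℕ) → (Fin n →₀ ℕ) → Prop :=
  fun α β => toLex (mwt M α) ≤ toLex (mwt M β)

/-! The initial ideal is graded by weight, and its degree-`e` piece is the space of degree-`e`
components of elements of `I` having no term of weight below `e`. This space contains the
degree-`e` part of every generator `in(f)`, and multiplying by a monomial `x^γ` shifts it into
the piece of degree `e + weight γ`, because weights are additive. Hence every nonzero homogeneous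
component of `h ∈ in(I)` is itself an initial form `in(f_e)`, and `h` is the sum of its
components, which have pairwise distinct degrees. -/

open Finsupp (weight)

namespace MvPolynomial

section Weighted

variable {σ R Γ : Type*} [CommSemiring R] {w : σ → Γ}

lemma sum_weightedHomogeneousComponent_image [AddCommMonoid Γ] [DecidableEq Γ]
    (φ : MvPolynomial σ R) :
    ∑ m ∈ φ.support.image (weight w), weightedHomogeneousComponent w m φ = φ := by
  conv_rhs => rw [← sum_weightedHomogeneousComponent w φ]
  refine (finsum_eq_sum_of_support_subset _ fun m hm => ?_).symm
  by_contra hm'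
  refine hm (weightedHomogeneousComponent_eq_zero' m φ fun d hd hdm => hm' ?_)
  exact Finset.mem_image.mpr ⟨d, hd, hdm⟩

lemma weightedHomogeneousComponent_ne_zero_of_mem_support [AddCommMonoid Γ]
    {φ : MvPolynomial σ R} {d : σ →₀ ℕ} (hd : d ∈ φ.support) :
    weightedHomogeneousComponent w (weight w d) φ ≠ 0 := by
  classical
  intro h0
  have := congr_arg (coeff d) h0
  rw [coeff_weightedHomogeneousComponent, if_pos rfl, coeff_zero] at this
  exact mem_support_iff.mp hd this

attribute [local instance] weightedGradedAlgebra in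
lemma IsWeightedHomogeneous.weightedHomogeneousComponent_mul_add [AddCancelCommMonoid Γ]
    {a : MvPolynomial σ R} {i : Γ} (ha : IsWeightedHomogeneous w a i) (j : Γ)
    (φ : MvPolynomial σ R) :
    weightedHomogeneousComponent w (i + j) (a * φ) = a * weightedHomogeneousComponent w j φ := by
  classical
  simp_rw [← weightedDecomposition.decompose'_apply]
  exact DirectSum.coe_decompose_mul_add_of_left_mem (𝒜 := weightedHomogeneousSubmodule R w) ha

/-- The degree-`e` part of the initial ideal of `I`. -/
def initialComponent [AddCommMonoid Γ] [LE Γ] (w : σ → Γ) (I : Ideal (MvPolynomial σ R))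
    (e : Γ) : Submodule R (MvPolynomial σ R) where
  carrier := {g | ∃ f ∈ I, (∀ d ∈ f.support, e ≤ weight w d) ∧
    weightedHomogeneousComponent w e f = g}
  zero_mem' := ⟨0, I.zero_mem, by simp, map_zero _⟩
  add_mem' := by
    classical
    rintro _ _ ⟨f, hfI, hf, rfl⟩ ⟨g, hgI, hg, rfl⟩
    refine ⟨f + g, I.add_mem hfI hgI, fun d hd => ?_, map_add _ f g⟩
    rcases Finset.mem_union.mp (support_add hd) with hd | hd
    exacts [hf d hd, hg d hd]
  smul_mem' := by
    rintro c _ ⟨f, hfI, hf, rfl⟩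
    exact ⟨c • f, I.smul_of_tower_mem c hfI, fun d hd => hf d (support_smul hd), map_smul _ c f⟩

lemma IsWeightedHomogeneous.mul_mem_initialComponent [AddCancelCommMonoid Γ] [PartialOrder Γ]
    [IsOrderedAddMonoid Γ] {I : Ideal (MvPolynomial σ R)} {a g : MvPolynomial σ R} {i e : Γ}
    (ha : IsWeightedHomogeneous w a i) (hg : g ∈ initialComponent w I e) :
    a * g ∈ initialComponent w I (i + e) := by
  classical
  obtain ⟨f, hfI, hf, rfl⟩ := hg
  refine ⟨a * f, I.mul_mem_left a hfI, fun d hd => ?_, ha.weightedHomogeneousComponent_mul_add e f⟩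
  obtain ⟨b, hb, c, hc, rfl⟩ := Finset.mem_add.mp (support_mul a f hd)
  rw [map_add, ha (mem_support_iff.mp hb)]
  exact add_le_add_right (hf c hc) i

def weightLe [AddCommMonoid Γ] [LE Γ] (w : σ → Γ) : (σ →₀ ℕ) → (σ →₀ ℕ) → Prop :=
  fun α β => weight w α ≤ weight w β

end Weighted

section InitialForm

variable {k : Type} {Γ : Type*} [Field k] {n : ℕ} {w : Fin n → Γ} {f : MvPolynomial (Fin n) k}

lemma initialForm_weightLe_eq [AddCommMonoid Γ] [PartialOrder Γ] {e : Γ}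
    (hmin : ∀ d ∈ f.support, e ≤ weight w d) (hne : weightedHomogeneousComponent w e f ≠ 0) :
    initialForm (weightLe w) f = weightedHomogeneousComponent w e f := by
  classical
  obtain ⟨d₀, hd₀, rfl⟩ : ∃ d ∈ f.support, weight w d = e := by
    by_contra! h
    exact hne (weightedHomogeneousComponent_eq_zero' _ f h)
  rw [initialForm, weightedHomogeneousComponent_apply]
  -- `initialForm` filters with `Classical.decPred`, which instance synthesis would not produce.
  refine Finset.sum_congr (@Finset.filter_congr _ _ _ (Classical.decPred _) _ _ fun d hd => ?_)
    fun _ _ => rfl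
  exact ⟨fun h => le_antisymm (h d₀ hd₀) (hmin d hd), fun h d' hd' => (h ▸ hmin d' hd' :)⟩

lemma exists_initialForm_weightLe_eq [AddCommMonoid Γ] [LinearOrder Γ] (hf : f ≠ 0) :
    ∃ e, (∀ d ∈ f.support, e ≤ weight w d) ∧
      initialForm (weightLe w) f = weightedHomogeneousComponent w e f := by
  have hs : (f.support.image (weight w)).Nonempty := (support_nonempty.mpr hf).image _
  obtain ⟨d₀, hd₀, he⟩ := Finset.mem_image.mp (Finset.min'_mem _ hs)
  have hmin : ∀ d ∈ f.support, weight w d₀ ≤ weight w d := fun d hd =>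
    he ▸ Finset.min'_le _ _ (Finset.mem_image_of_mem _ hd)
  exact ⟨_, hmin,
    initialForm_weightLe_eq hmin (weightedHomogeneousComponent_ne_zero_of_mem_support hd₀)⟩

variable [AddCommGroup Γ] [LinearOrder Γ] [IsOrderedAddMonoid Γ]
  {I : Ideal (MvPolynomial (Fin n) k)} {h : MvPolynomial (Fin n) k}

lemma weightedHomogeneousComponent_mem_initialComponent (hh : h ∈ initialIdeal (weightLe w) I)
    (e : Γ) : weightedHomogeneousComponent w e h ∈ initialComponent w I e := by
  induction hh using Submodule.span_induction generalizing e with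
  | mem g hg =>
    obtain ⟨f, hfI, hf, rfl⟩ := hg
    obtain ⟨d, hmin, hfd⟩ := exists_initialForm_weightLe_eq (w := w) hf
    have hhom := weightedHomogeneousComponent_isWeightedHomogeneous (w := w) d f
    rw [hfd]
    obtain rfl | hne := eq_or_ne e d
    · exact ⟨f, hfI, hmin, hhom.weightedHomogeneousComponent_same.symm⟩
    · rw [hhom.weightedHomogeneousComponent_ne e hne]
      exact zero_mem _
  | zero => simp
  | add x y _ _ hx hy => simpa using add_mem (hx e) (hy e)
  | smul p x _ hx =>
    rw [smul_eq_mul, as_sum p, Finset.sum_mul, map_sum]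
    refine Submodule.sum_mem _ fun d _ => ?_
    have hmono := isWeightedHomogeneous_monomial w d (coeff d p) rfl
    rw [← add_sub_cancel (weight w d) e, hmono.weightedHomogeneousComponent_mul_add]
    exact hmono.mul_mem_initialComponent (hx _)

lemma exists_initialForm_eq_weightedHomogeneousComponent
    (hh : h ∈ initialIdeal (weightLe w) I) {e : Γ} (hne : weightedHomogeneousComponent w e h ≠ 0) :
    ∃ f ∈ I, f ≠ 0 ∧ initialForm (weightLe w) f = weightedHomogeneousComponent w e h := by
  obtain ⟨f, hfI, hmin, hf⟩ := weightedHomogeneousComponent_mem_initialComponent hh e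
  refine ⟨f, hfI, ?_, ?_⟩
  · rintro rfl
    exact hne (by simpa using hf.symm)
  · rw [initialForm_weightLe_eq hmin (hf ▸ hne), hf]

theorem exists_sum_initialForm_of_mem_initialIdeal (hh : h ∈ initialIdeal (weightLe w) I) :
    ∃ (D : Finset Γ) (f : Γ → MvPolynomial (Fin n) k),
      (∀ e ∈ D, f e ∈ I ∧ f e ≠ 0 ∧
        IsWeightedHomogeneous w (initialForm (weightLe w) (f e)) e) ∧
      h = ∑ e ∈ D, initialForm (weightLe w) (f e) := by
  have key : ∀ e ∈ h.support.image (weight w), ∃ f ∈ I, f ≠ 0 ∧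
      initialForm (weightLe w) f = weightedHomogeneousComponent w e h := by
    intro e he
    obtain ⟨d, hd, rfl⟩ := Finset.mem_image.mp he
    exact exists_initialForm_eq_weightedHomogeneousComponent hh
      (weightedHomogeneousComponent_ne_zero_of_mem_support hd)
  choose! f hfI hf0 hf using key
  refine ⟨_, f, fun e he => ⟨hfI e he, hf0 e he, ?_⟩, ?_⟩
  · exact hf e he ▸ weightedHomogeneousComponent_isWeightedHomogeneous e h
  · rw [Finset.sum_congr rfl hf, sum_weightedHomogeneousComponent_image]

end InitialForm

end MvPolynomial

open MvPolynomial

def lexWeight {n r : ℕ} (M : Matrix (Fin r) (Fin n) ℚ) : Fin n → Lex (Fin r → ℚ) :=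
  fun j => toLex fun i => M i j

lemma weight_lexWeight {n r : ℕ} (M : Matrix (Fin r) (Fin n) ℚ) (α : Fin n →₀ ℕ) :
    weight (lexWeight M) α = toLex (mwt M α) := by
  rw [Finsupp.weight_apply, Finsupp.sum_fintype _ _ (fun i => zero_smul ℕ (lexWeight M i))]
  funext i
  change (∑ j, α j • fun i => M i j : Fin r → ℚ) i = _
  simp [mwt, Finset.sum_apply, mul_comm]

lemma mLe_eq_weightLe {n r : ℕ} (M : Matrix (Fin r) (Fin n) ℚ) :
    mLe M = weightLe (lexWeight M) := by
  funext α β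
  simp only [mLe, weightLe, weight_lexWeight]

theorem stmt_4_general {k : Type} [Field k] {n r : ℕ}
    (I : Ideal (MvPolynomial (Fin n) k)) (M : Matrix (Fin r) (Fin n) ℚ)
    (h : MvPolynomial (Fin n) k) (hh : h ∈ initialIdeal (mLe M) I) :
    ∃ (s : ℕ) (f : Fin s → MvPolynomial (Fin n) k) (deg : Fin s → Lex (Fin r → ℚ)),
      (∀ i, f i ∈ I ∧ f i ≠ 0) ∧
      h = ∑ i, initialForm (mLe M) (f i) ∧
      Function.Injective deg ∧
      (∀ i, ∀ α ∈ (initialForm (mLe M) (f i)).support, toLex (mwt M α) = deg i) := by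
  rw [mLe_eq_weightLe] at hh ⊢
  obtain ⟨D, f, hf, rfl⟩ := exists_sum_initialForm_of_mem_initialIdeal hh
  let e := D.equivFin.symm
  refine ⟨D.card, fun i => f (e i), fun i => e i, fun i => ⟨(hf _ (e i).2).1, (hf _ (e i).2).2.1⟩,
    ?_, fun i j hij => e.injective (Subtype.ext hij), fun i α hα => ?_⟩
  · rw [← Finset.sum_coe_sort D, ← e.sum_comp]
  · rw [← weight_lexWeight]
    exact (hf _ (e i).2).2.2 (mem_support_iff.mp hα)

/-- **Decomposition of elements of an initial ideal** (Lemma `initialformwrite`).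
Any nonzero `h ∈ in_M(I)` can be written as a sum `Σ in_M(fᵢ)` with `fᵢ ∈ I` nonzero, where
the summands are `M`-homogeneous of pairwise distinct degrees. -/
theorem stmt_4 {k : Type} [Field k] {n r : ℕ}
    (I : Ideal (MvPolynomial (Fin n) k)) (M : Matrix (Fin r) (Fin n) ℚ)
    (h : MvPolynomial (Fin n) k) (hh : h ∈ initialIdeal (mLe M) I) (hne : h ≠ 0) :
    ∃ (s : ℕ) (f : Fin s → MvPolynomial (Fin n) k) (deg : Fin s → Lex (Fin r → ℚ)),
      (∀ i, f i ∈ I ∧ f i ≠ 0) ∧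
      h = ∑ i, initialForm (mLe M) (f i) ∧
      Function.Injective deg ∧
      (∀ i, ∀ α ∈ (initialForm (mLe M) (f i)).support, toLex (mwt M α) = deg i) :=
  stmt_4_general I M h hh
end

section
/- Let I ⊆ k[x_1,…,x_n] be an ideal, > a monomial order, G_>(I) the reduced Gröbner basis of I with respect to >, and M ∈ ℚ^{r×n} (with ℚ^r carrying the lexicographic order ≻) such that in_>(in_M(I)) = in_>(I). Then {in_M(g) : g ∈ G_>(I)} is the reduced Gröbner basis of the ideal in_M(I) with respect to >. -/
open MvPolynomial

/-- A monomial order on `k[x₁,…,xₙ]` in the MIN convention: a total order on exponent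
vectors compatible with addition in which `0` (the monomial `1`) is the greatest element. -/
structure MinMonomialOrder (n : ℕ) where
  le : (Fin n →₀ ℕ) → (Fin n →₀ ℕ) → Prop
  total : ∀ a b, le a b ∨ le b a
  antisymm : ∀ a b, le a b → le b a → a = b
  trans : ∀ a b c, le a b → le b c → le a c
  add_le_add : ∀ a b c, le a b → le (a + c) (b + c)
  le_zero : ∀ a, le a 0

/-- `α` is the exponent of the initial (i.e. `le`-smallest) term of `f`. -/
def IsLeadExp {k : Type} [Field k] {n : ℕ} (mo : MinMonomialOrder n)
    (f : MvPolynomial (Fin n) k) (α : Fin n →₀ ℕ) : Prop :=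
  α ∈ f.support ∧ ∀ β ∈ f.support, mo.le α β

/-- `G` is the reduced Gröbner basis of `I` with respect to the monomial order `mo`:
`G ⊆ I`, the initial terms of `G` generate the initial ideal of `I`, every `g ∈ G` is monic,
no initial term of one element divides the initial term of another, and no non-initial term
of any `g ∈ G` is divisible by the initial term of any `g' ∈ G`.  (Divisibility of monomials
is the componentwise order `≤` on exponents.) -/
def IsReducedGB {k : Type} [Field k] {n : ℕ} (mo : MinMonomialOrder n)
    (I : Ideal (MvPolynomial (Fin n) k)) (G : Finset (MvPolynomial (Fin n) k)) : Prop :=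
  (↑G : Set (MvPolynomial (Fin n) k)) ⊆ ↑I ∧ (0 : MvPolynomial (Fin n) k) ∉ G ∧
  initialIdeal mo.le I = Ideal.span ((fun g => initialForm mo.le g) '' ↑G) ∧
  (∀ g ∈ G, ∀ α, IsLeadExp mo g α → MvPolynomial.coeff α g = 1) ∧
  (∀ g ∈ G, ∀ g' ∈ G, g ≠ g' → ∀ α α', IsLeadExp mo g α → IsLeadExp mo g' α' → ¬ α' ≤ α) ∧
  (∀ g ∈ G, ∀ g' ∈ G, ∀ β ∈ g.support, ¬ IsLeadExp mo g β →
    ∀ α', IsLeadExp mo g' α' → ¬ α' ≤ β)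

section Aux
variable {k : Type} [Field k] {n : ℕ}

open scoped Classical in
lemma coeff_initialForm (le : (Fin n →₀ ℕ) → (Fin n →₀ ℕ) → Prop)
    (f : MvPolynomial (Fin n) k) (γ : Fin n →₀ ℕ) :
    MvPolynomial.coeff γ (initialForm le f) =
      if γ ∈ f.support ∧ ∀ β ∈ f.support, le γ β then MvPolynomial.coeff γ f else 0 := by
  classical
  rw [initialForm]
  rw [MvPolynomial.coeff_sum]
  simp_rw [MvPolynomial.coeff_monomial]
  rw [Finset.sum_ite_eq' ]
  simp [Finset.mem_filter]

lemma mem_support_initialForm (le : (Fin n →₀ ℕ) → (Fin n →₀ ℕ) → Prop)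
    (f : MvPolynomial (Fin n) k) (γ : Fin n →₀ ℕ) :
    γ ∈ (initialForm le f).support ↔ (γ ∈ f.support ∧ ∀ β ∈ f.support, le γ β) := by
  rw [MvPolynomial.mem_support_iff, coeff_initialForm]
  split_ifs with h
  · simpa [MvPolynomial.mem_support_iff.mp h.1] using h
  · exact ⟨fun h0 => absurd rfl h0, fun hc => absurd hc h⟩

lemma coeff_initialForm_of_mem {le : (Fin n →₀ ℕ) → (Fin n →₀ ℕ) → Prop}
    {f : MvPolynomial (Fin n) k} {γ : Fin n →₀ ℕ} (h : γ ∈ (initialForm le f).support) :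
    MvPolynomial.coeff γ (initialForm le f) = MvPolynomial.coeff γ f := by
  rw [coeff_initialForm, if_pos ((mem_support_initialForm le f γ).mp h)]

lemma exists_min {A : Type*} {le : A → A → Prop}
    (htot : ∀ a b, le a b ∨ le b a) (htr : ∀ a b c, le a b → le b c → le a c)
    (s : Finset A) (hs : s.Nonempty) : ∃ a ∈ s, ∀ b ∈ s, le a b := by
  classical
  induction s using Finset.cons_induction with
  | empty => exact absurd hs (by simp)
  | cons a s ha ih =>
    rcases s.eq_empty_or_nonempty with rfl | hsne
    · exact ⟨a, by simp, by
        intro b hb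
        simp only [Finset.cons_empty, Finset.mem_singleton] at hb
        subst hb; rcases htot b b with h | h <;> exact h⟩
    · obtain ⟨b, hb, hbmin⟩ := ih hsne
      rcases htot a b with h | h
      · exact ⟨a, Finset.mem_cons_self a s, by
          intro c hc
          rcases Finset.mem_cons.mp hc with rfl | hc
          · rcases htot c c with h' | h' <;> exact h'
          · exact htr _ _ _ h (hbmin c hc)⟩
      · exact ⟨b, Finset.mem_cons.mpr (Or.inr hb), by
          intro c hc
          rcases Finset.mem_cons.mp hc with rfl | hc
          · exact h
          · exact hbmin c hc⟩

lemma initialForm_ne_zero {le : (Fin n →₀ ℕ) → (Fin n →₀ ℕ) → Prop}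
    (htot : ∀ a b, le a b ∨ le b a) (htr : ∀ a b c, le a b → le b c → le a c)
    {f : MvPolynomial (Fin n) k} (hf : f ≠ 0) : initialForm le f ≠ 0 := by
  obtain ⟨a, ha, hamin⟩ := exists_min htot htr f.support
    (Finset.nonempty_iff_ne_empty.mpr fun h => hf (MvPolynomial.support_eq_empty.mp h))
  intro h
  have := (mem_support_initialForm le f a).mpr ⟨ha, hamin⟩
  rw [h] at this; simp at this

end Aux
section Main
variable {k : Type} [Field k] {n r : ℕ}

lemma isLeadExp_exists (mo : MinMonomialOrder n) {f : MvPolynomial (Fin n) k} (hf : f ≠ 0) :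
    ∃ α, IsLeadExp mo f α := by
  obtain ⟨a, ha, hmin⟩ := exists_min mo.total mo.trans f.support
    (Finset.nonempty_iff_ne_empty.mpr fun h => hf (MvPolynomial.support_eq_empty.mp h))
  exact ⟨a, ha, hmin⟩

lemma isLeadExp_unique (mo : MinMonomialOrder n) {f : MvPolynomial (Fin n) k}
    {α β : Fin n →₀ ℕ} (h1 : IsLeadExp mo f α) (h2 : IsLeadExp mo f β) : α = β :=
  mo.antisymm α β (h1.2 β h2.1) (h2.2 α h1.1)

lemma initialForm_eq_monomial (mo : MinMonomialOrder n) {f : MvPolynomial (Fin n) k}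
    {α : Fin n →₀ ℕ} (h : IsLeadExp mo f α) :
    initialForm mo.le f = monomial α (MvPolynomial.coeff α f) := by
  ext γ
  rw [coeff_initialForm, MvPolynomial.coeff_monomial]
  by_cases hγ : α = γ
  · subst hγ; rw [if_pos ⟨h.1, h.2⟩, if_pos rfl]
  · rw [if_neg hγ, if_neg]
    intro hc
    exact hγ (mo.antisymm α γ (h.2 γ hc.1) (hc.2 α h.1))

lemma mLe_total (M : Matrix (Fin r) (Fin n) ℚ) : ∀ a b, mLe M a b ∨ mLe M b a :=
  fun _ _ => le_total _ _

lemma mLe_trans (M : Matrix (Fin r) (Fin n) ℚ) :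
    ∀ a b c, mLe M a b → mLe M b c → mLe M a c :=
  fun _ _ _ h1 h2 => le_trans h1 h2

lemma key (I : Ideal (MvPolynomial (Fin n) k)) (mo : MinMonomialOrder n)
    (G : Finset (MvPolynomial (Fin n) k)) (hG : IsReducedGB mo I G)
    (M : Matrix (Fin r) (Fin n) ℚ)
    (hM : initialIdeal mo.le (initialIdeal (mLe M) I) = initialIdeal mo.le I)
    {g : MvPolynomial (Fin n) k} (hg : g ∈ G) {α : Fin n →₀ ℕ} (hα : IsLeadExp mo g α) :
    IsLeadExp mo (initialForm (mLe M) g) α := by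
  obtain ⟨hGI, hG0, hGspan, hGmonic, hGdiv, hGred⟩ := hG
  have hg0 : g ≠ 0 := fun h => hG0 (h ▸ hg)
  have hne : initialForm (mLe M) g ≠ 0 :=
    initialForm_ne_zero (mLe_total M) (mLe_trans M) hg0
  obtain ⟨β, hβ⟩ := isLeadExp_exists mo hne
  have hmem : initialForm mo.le (initialForm (mLe M) g) ∈
      Ideal.span ((fun g => initialForm mo.le g) '' ↑G) := by
    rw [← hGspan, ← hM]
    exact Ideal.subset_span ⟨initialForm (mLe M) g,
      Ideal.subset_span ⟨g, hGI hg, hg0, rfl⟩, hne, rfl⟩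
  have himg : (fun g => initialForm mo.le g) '' (↑G : Set (MvPolynomial (Fin n) k))
      = (fun s => monomial s (1:k)) '' {α | ∃ g ∈ G, IsLeadExp mo g α} := by
    ext p
    constructor
    · rintro ⟨g', hg', rfl⟩
      have hg'0 : g' ≠ 0 := fun h => hG0 (h ▸ hg')
      obtain ⟨α', hα'⟩ := isLeadExp_exists mo hg'0
      exact ⟨α', ⟨g', hg', hα'⟩, by
        show monomial α' (1:k) = initialForm mo.le g'
        rw [initialForm_eq_monomial mo hα', hGmonic g' hg' α' hα']⟩
    · rintro ⟨α', ⟨g', hg', hα'⟩, rfl⟩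
      exact ⟨g', hg', by
        show initialForm mo.le g' = monomial α' (1:k)
        rw [initialForm_eq_monomial mo hα', hGmonic g' hg' α' hα']⟩
  rw [himg] at hmem
  have hc : MvPolynomial.coeff β (initialForm (mLe M) g) ≠ 0 :=
    MvPolynomial.mem_support_iff.mp hβ.1
  have hβ2 : β ∈ (initialForm mo.le (initialForm (mLe M) g)).support := by
    rw [initialForm_eq_monomial mo hβ]
    simp [MvPolynomial.support_monomial, hc]
  obtain ⟨α', ⟨g', hg', hα''⟩, hle⟩ := MvPolynomial.mem_ideal_span_monomial_image.mp hmem β hβ2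
  have hβsup : β ∈ g.support := ((mem_support_initialForm _ g β).mp hβ.1).1
  by_cases hbl : IsLeadExp mo g β
  · have heq : β = α := isLeadExp_unique mo hbl hα
    exact heq ▸ hβ
  · exact absurd hle (hGred g hg g' hg' β hβsup hbl α' hα'')

lemma lead_back (I : Ideal (MvPolynomial (Fin n) k)) (mo : MinMonomialOrder n)
    (G : Finset (MvPolynomial (Fin n) k)) (hG : IsReducedGB mo I G)
    (M : Matrix (Fin r) (Fin n) ℚ)
    (hM : initialIdeal mo.le (initialIdeal (mLe M) I) = initialIdeal mo.le I)
    {g : MvPolynomial (Fin n) k} (hg : g ∈ G) {α : Fin n →₀ ℕ}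
    (hα : IsLeadExp mo (initialForm (mLe M) g) α) : IsLeadExp mo g α := by
  have hg0 : g ≠ 0 := fun h => hG.2.1 (h ▸ hg)
  obtain ⟨α₀, hα₀⟩ := isLeadExp_exists mo hg0
  have hk := key I mo G hG M hM hg hα₀
  have : α = α₀ := isLeadExp_unique mo hα hk
  exact this ▸ hα₀

lemma initialForm_comm (I : Ideal (MvPolynomial (Fin n) k)) (mo : MinMonomialOrder n)
    (G : Finset (MvPolynomial (Fin n) k)) (hG : IsReducedGB mo I G)
    (M : Matrix (Fin r) (Fin n) ℚ)
    (hM : initialIdeal mo.le (initialIdeal (mLe M) I) = initialIdeal mo.le I)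
    {g : MvPolynomial (Fin n) k} (hg : g ∈ G) :
    initialForm mo.le (initialForm (mLe M) g) = initialForm mo.le g := by
  have hg0 : g ≠ 0 := fun h => hG.2.1 (h ▸ hg)
  obtain ⟨α, hα⟩ := isLeadExp_exists mo hg0
  have hk := key I mo G hG M hM hg hα
  rw [initialForm_eq_monomial mo hk, initialForm_eq_monomial mo hα,
      coeff_initialForm_of_mem hk.1]

end Main

/-- **The reduced Gröbner basis of an initial ideal** (Lemma `initialreduced`).
If `M ∈ C_>(I)`, i.e. `in_>(in_M(I)) = in_>(I)`, then `{in_M(g) : g ∈ G_>(I)}` is the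
reduced Gröbner basis of `in_M(I)` with respect to `>`. -/
theorem stmt_6 {k : Type} [Field k] {n r : ℕ}
    (I : Ideal (MvPolynomial (Fin n) k)) (mo : MinMonomialOrder n)
    (G : Finset (MvPolynomial (Fin n) k)) (hG : IsReducedGB mo I G)
    (M : Matrix (Fin r) (Fin n) ℚ)
    (hM : initialIdeal mo.le (initialIdeal (mLe M) I) = initialIdeal mo.le I) :
    IsReducedGB mo (initialIdeal (mLe M) I)
      (@Finset.image _ _ (Classical.decEq _) (fun g => initialForm (mLe M) g) G) := by
  classical
  have himg_eq : (@Finset.image _ _ (Classical.decEq _) (fun g => initialForm (mLe M) g) G)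
      = G.image (fun g => initialForm (mLe M) g) := by
    congr!
  rw [himg_eq]
  obtain ⟨hGI, hG0, hGspan, hGmonic, hGdiv, hGred⟩ := hG
  have hG' : IsReducedGB mo I G := ⟨hGI, hG0, hGspan, hGmonic, hGdiv, hGred⟩
  have hne0 : ∀ g ∈ G, g ≠ 0 := fun g hg h => hG0 (h ▸ hg)
  refine ⟨?_, ?_, ?_, ?_, ?_, ?_⟩
  · intro x hx
    obtain ⟨g, hg, rfl⟩ := Finset.mem_image.mp hx
    exact Ideal.subset_span ⟨g, hGI hg, hne0 g hg, rfl⟩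
  · intro h
    obtain ⟨g, hg, heq⟩ := Finset.mem_image.mp h
    exact initialForm_ne_zero (mLe_total M) (mLe_trans M) (hne0 g hg) heq
  · rw [hM, hGspan, Finset.coe_image, Set.image_image]
    exact congrArg Ideal.span
      (Set.image_congr fun g hg => (initialForm_comm I mo G hG' M hM hg).symm)
  · intro h hh α hα
    obtain ⟨g, hg, rfl⟩ := Finset.mem_image.mp hh
    rw [coeff_initialForm_of_mem hα.1]
    exact hGmonic g hg α (lead_back I mo G hG' M hM hg hα)
  · intro h hh h' hh' hne α α' hα hα'
    obtain ⟨g, hg, rfl⟩ := Finset.mem_image.mp hh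
    obtain ⟨g', hg', rfl⟩ := Finset.mem_image.mp hh'
    have hgg' : g ≠ g' := fun h => hne (h ▸ rfl)
    exact hGdiv g hg g' hg' hgg' α α'
      (lead_back I mo G hG' M hM hg hα) (lead_back I mo G hG' M hM hg' hα')
  · intro h hh h' hh' β hβ hβnl α' hα'
    obtain ⟨g, hg, rfl⟩ := Finset.mem_image.mp hh
    obtain ⟨g', hg', rfl⟩ := Finset.mem_image.mp hh'
    have hβsup : β ∈ g.support := ((mem_support_initialForm _ g β).mp hβ).1
    have hβnl' : ¬ IsLeadExp mo g β := fun hc => hβnl (key I mo G hG' M hM hg hc)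
    exact hGred g hg g' hg' β hβsup hβnl' α' (lead_back I mo G hG' M hM hg' hα')
end

section
/- Let ≻ be a linear order on ℚ^r making it a linearly ordered abelian group and refining the componentwise partial order (if w ∈ ℚ^r has all components ≥ 0 then w ⪰ 0; e.g. the lexicographic order). Let A_1,…,A_m ⊂ ℚ^r be finite nonempty sets, and for each i let β_i denote the ≻-minimum of A_i. Then there exists a vector v ∈ ℚ^r with all components ≥ 0 such that for every i and every α ∈ A_i with α ≻ β_i, the standard inner product satisfies v·(β_i − α) < 0. -/
/-!
The differences `β i - a` with `β i < a` are negative in `Γ`. Since `0 < n • x ↔ 0 < x` in an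
ordered group, positive rational multiples of negative elements stay negative, so, as the order
refines the componentwise one, no convex combination with rational weights of their images in
`ℚ^r` is componentwise nonnegative. Gordan's theorem of the alternative over an ordered field then
yields `v ≥ 0` with `v · (β i - a) < 0` for all of them. Gordan's theorem is proved by
Fourier–Motzkin elimination: drop the first coordinate by pairing every inequality with a positive
first coefficient with every one with a negative first coefficient, solve the smaller system, and
choose the first coordinate of `v` between the resulting lower and upper bounds.
-/

open Matrix

theorem exists_nonneg_forall_mul_add_neg {K : Type*} [Field K] [LinearOrder K]
    [IsStrictOrderedRing K] {ι : Type*} [Finite ι] (a b : ι → K)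
    (hb : ∀ k, 0 ≤ a k → b k < 0)
    (hab : ∀ l k, a l < 0 → 0 < a k → a k * b l - a l * b k < 0) :
    ∃ t, 0 ≤ t ∧ ∀ k, t * a k + b k < 0 := by
  obtain ⟨t, hlow, hup⟩ := Set.Finite.exists_between'
    ((Set.finite_range fun l : {l // a l < 0} => -b l / a l).insert 0)
    (Set.finite_range fun k : {k // 0 < a k} => -b k / a k) (by
      rintro x (rfl | ⟨⟨l, hl⟩, rfl⟩) _ ⟨⟨k, hk⟩, rfl⟩
      · exact div_pos (neg_pos.2 (hb k hk.le)) hk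
      · dsimp only
        rw [← neg_div_neg_eq, neg_neg, div_lt_div_iff₀ (neg_pos.2 hl) hk]
        linarith [hab l k hl hk])
  refine ⟨t, (hlow 0 (Set.mem_insert _ _)).le, fun k => ?_⟩
  rcases lt_trichotomy (a k) 0 with hk | hk | hk
  · have hlt := hlow _ (Set.mem_insert_of_mem _ ⟨⟨k, hk⟩, rfl⟩)
    rw [div_lt_iff_of_neg hk] at hlt
    linarith
  · simp [hk, hb k hk.ge]
  · have hlt := hup _ ⟨⟨k, hk⟩, rfl⟩
    rw [lt_div_iff₀ hk] at hlt
    linarith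

section FourierMotzkin

variable {K : Type*} [Field K] [LinearOrder K] {ι : Type*} [DecidableEq ι]

/-- Row `inl k` keeps the `k`-th inequality; row `inr (l, k)` is the combination of the `l`-th and
`k`-th ones that cancels the coefficient `a`, normalised to total weight `1`. -/
def fourierMotzkinCoeff (a : ι → K) :
    Matrix ({k // 0 ≤ a k} ⊕ ({l // a l < 0} × {k // 0 < a k})) ι K :=
  Sum.elim (fun k => Pi.single (k : ι) 1) fun (l, k) =>
    (a k - a l)⁻¹ • (a k • Pi.single (l : ι) 1 - a l • Pi.single (k : ι) 1)

theorem fourierMotzkinCoeff_nonneg [IsStrictOrderedRing K] (a : ι → K) :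
    ∀ i m, 0 ≤ fourierMotzkinCoeff a i m := by
  have hsingle (k : ι) : (0 : ι → K) ≤ Pi.single k 1 := Pi.single_nonneg.2 zero_le_one
  rintro (k | ⟨⟨l, hl⟩, ⟨k, hk⟩⟩) m
  · exact hsingle k m
  · have hcomb : 0 ≤ a k • Pi.single l (1 : K) - a l • Pi.single k 1 := by
      rw [sub_eq_add_neg, ← neg_smul]
      exact add_nonneg (smul_nonneg hk.le (hsingle l))
        (smul_nonneg (neg_nonneg.2 hl.le) (hsingle k))
    exact smul_nonneg (inv_nonneg.2 (sub_nonneg.2 (hl.trans hk).le)) hcomb m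

variable [Fintype ι] (a : ι → K)

@[simp]
theorem fourierMotzkinCoeff_inl_dotProduct (x : ι → K) (k : {k // 0 ≤ a k}) :
    fourierMotzkinCoeff a (.inl k) ⬝ᵥ x = x k := by
  simp [fourierMotzkinCoeff]

@[simp]
theorem fourierMotzkinCoeff_inr_dotProduct (x : ι → K) (l : {l // a l < 0})
    (k : {k // 0 < a k}) :
    fourierMotzkinCoeff a (.inr (l, k)) ⬝ᵥ x = (a k - a l)⁻¹ * (a k * x l - a l * x k) := by
  simp [fourierMotzkinCoeff]

theorem fourierMotzkinCoeff_mulVec_self_nonneg : 0 ≤ fourierMotzkinCoeff a *ᵥ a := by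
  rintro (k | ⟨l, k⟩)
  · simpa [mulVec] using k.2
  · simp [mulVec, mul_comm]

variable [IsStrictOrderedRing K]

theorem fourierMotzkinCoeff_mulVec_one : fourierMotzkinCoeff a *ᵥ 1 = 1 := by
  funext i
  rcases i with k | ⟨⟨l, hl⟩, ⟨k, hk⟩⟩
  · simp [mulVec]
  · simp only [mulVec, fourierMotzkinCoeff_inr_dotProduct, Pi.one_apply]
    rw [mul_one, mul_one, inv_mul_cancel₀ (by linarith)]

end FourierMotzkin

theorem Matrix.exists_nonneg_forall_mulVec_neg {K : Type*} [Field K] [LinearOrder K]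
    [IsStrictOrderedRing K] {ι : Type*} [Fintype ι] {n : ℕ} (W : Matrix ι (Fin n) K)
    (hW : ∀ c : ι → K, 0 ≤ c → ∑ k, c k = 1 → ¬ 0 ≤ c ᵥ* W) :
    ∃ v, 0 ≤ v ∧ ∀ k, (W *ᵥ v) k < 0 := by
  classical
  induction n generalizing ι with
  | zero =>
    refine ⟨0, le_rfl, fun k => (hW (Pi.single k 1) (Pi.single_nonneg.2 zero_le_one) (by simp)
      fun j => j.elim0).elim⟩
  | succ n ih =>
    set a : ι → K := fun k => W k 0
    set T : Matrix ι (Fin n) K := W.submatrix id Fin.succ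
    obtain ⟨v, hv, hWv⟩ := ih (fourierMotzkinCoeff a * T) fun c hc hc1 hcW => by
      refine hW (c ᵥ* fourierMotzkinCoeff a) (fun m => Finset.sum_nonneg fun i _ =>
        mul_nonneg (hc i) (fourierMotzkinCoeff_nonneg a i m)) ?_ ?_
      · rw [← dotProduct_one, ← dotProduct_mulVec, fourierMotzkinCoeff_mulVec_one, dotProduct_one,
          hc1]
      · refine Fin.cases ?_ fun j => ?_
        · show 0 ≤ (c ᵥ* fourierMotzkinCoeff a) ⬝ᵥ a
          rw [← dotProduct_mulVec]
          exact dotProduct_nonneg_of_nonneg hc (fourierMotzkinCoeff_mulVec_self_nonneg a)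
        · show 0 ≤ (c ᵥ* fourierMotzkinCoeff a ᵥ* T) j
          rw [vecMul_vecMul]
          exact hcW j
    have hb (i) : fourierMotzkinCoeff a i ⬝ᵥ (T *ᵥ v) < 0 := by
      rw [← mulVec_mulVec] at hWv
      exact hWv i
    obtain ⟨t, ht, htW⟩ := exists_nonneg_forall_mul_add_neg a (T *ᵥ v)
      (fun k hk => by simpa using hb (.inl ⟨k, hk⟩))
      (fun l k hl hk => neg_of_mul_neg_right (by simpa using hb (.inr (⟨l, hl⟩, ⟨k, hk⟩)))
        (inv_nonneg.2 (sub_nonneg.2 (hl.trans hk).le)))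
    refine ⟨vecCons t v, Fin.cases ht hv, fun k => ?_⟩
    simpa [mulVec, dotProduct_cons, mul_comm, a, T, vecHead, vecTail, Function.comp_def]
      using htW k

section OrderedGroup

variable {Γ V : Type*} [AddCommGroup Γ] [LinearOrder Γ] [IsOrderedAddMonoid Γ] [AddCommGroup V]
  [Module ℚ V] (e : Γ ≃+ V)

theorem AddEquiv.symm_smul_apply_neg {γ : Γ} (hγ : γ < 0) {q : ℚ} (hq : 0 < q) :
    e.symm (q • e γ) < 0 := by
  have hnum : ((q.num.natAbs : ℕ) : ℚ) = q.den * q := by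
    rw [Rat.den_mul_eq_num, Nat.cast_natAbs, abs_of_nonneg (Rat.num_nonneg.2 hq.le)]
  have key : q.den • e.symm (q • e γ) = q.num.natAbs • γ := e.injective <| by
    rw [map_nsmul, map_nsmul, e.apply_symm_apply, ← Nat.cast_smul_eq_nsmul ℚ,
      ← Nat.cast_smul_eq_nsmul ℚ, smul_smul, hnum]
  rw [← nsmul_neg_iff q.den_ne_zero, key,
    nsmul_neg_iff (Int.natAbs_ne_zero.2 (Rat.num_pos.2 hq).ne')]
  exact hγ

theorem AddEquiv.symm_sum_smul_apply_neg {ι : Type*} [Fintype ι] {γ : ι → Γ} (hγ : ∀ k, γ k < 0)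
    {c : ι → ℚ} (hc : 0 ≤ c) (hc1 : ∑ k, c k = 1) : e.symm (∑ k, c k • e (γ k)) < 0 := by
  obtain ⟨k, hk⟩ : ∃ k, 0 < c k := by
    by_contra! h
    linarith [Finset.univ.sum_nonpos fun k _ => h k]
  have hterm (k) : e.symm (c k • e (γ k)) ≤ 0 := by
    rcases (hc k).eq_or_lt with h | h
    · simp [← h]
    · exact (e.symm_smul_apply_neg (hγ k) h).le
  rw [map_sum]
  exact Finset.sum_neg' (fun k _ => hterm k)
    ⟨k, Finset.mem_univ k, e.symm_smul_apply_neg (hγ k) hk⟩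

end OrderedGroup

theorem stmt_9_general {r : ℕ} {Γ : Type} [AddCommGroup Γ] [LinearOrder Γ] [IsOrderedAddMonoid Γ]
    (e : Γ ≃+ (Fin r → ℚ))
    (href : ∀ γ : Γ, (∀ j, 0 ≤ e γ j) → 0 ≤ γ)
    {m : ℕ} (A : Fin m → Finset Γ)
    (β : Fin m → Γ) :
    ∃ v : Fin r → ℚ, (∀ j, 0 ≤ v j) ∧
      ∀ i, ∀ a ∈ A i, β i < a → (∑ j, v j * (e (β i) j - e a j)) < 0 := by
  let W : Matrix (Σ i, (A i).filter (β i < ·)) (Fin r) ℚ := fun p => e (β p.1 - p.2)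
  have hneg (p : Σ i, (A i).filter (β i < ·)) : β p.1 - p.2 < 0 :=
    sub_neg.2 (Finset.mem_filter.1 p.2.2).2
  obtain ⟨v, hv, hWv⟩ := W.exists_nonneg_forall_mulVec_neg fun c hc hc1 hcW =>
    (e.symm_sum_smul_apply_neg hneg hc hc1).not_ge <| href _ fun j => by
      rw [e.apply_symm_apply, ← vecMul_eq_sum (M := W)]
      exact hcW j
  refine ⟨v, hv, fun i a ha hlt => ?_⟩
  simpa [W, mulVec, dotProduct, mul_comm] using hWv ⟨i, a, Finset.mem_filter.2 ⟨ha, hlt⟩⟩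

/-- **Existence of a compatible nonnegative linear functional** (Lemma `lem-weight-approx`).
Let `≻` be a linear order making `ℚ^r` a linearly ordered abelian group which refines the
componentwise partial order (encoded by a linearly ordered abelian group `Γ` with an additive
isomorphism `e : Γ ≃+ ℚ^r` such that `γ ⪰ 0` whenever all components of `e γ` are `≥ 0`).
Given finite nonempty sets `A_1, …, A_m ⊂ ℚ^r` with ≻-minima `β_1, …, β_m`, there is a
componentwise nonnegative `v ∈ ℚ^r` with `v · (β_i − α) < 0` whenever `α ∈ A_i`, `α ≻ β_i`. -/
theorem stmt_9 {r : ℕ} {Γ : Type} [AddCommGroup Γ] [LinearOrder Γ] [IsOrderedAddMonoid Γ]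
    (e : Γ ≃+ (Fin r → ℚ))
    (href : ∀ γ : Γ, (∀ j, 0 ≤ e γ j) → 0 ≤ γ)
    {m : ℕ} (A : Fin m → Finset Γ) (hA : ∀ i, (A i).Nonempty)
    (β : Fin m → Γ) (hβ : ∀ i, β i ∈ A i ∧ ∀ a ∈ A i, β i ≤ a) :
    ∃ v : Fin r → ℚ, (∀ j, 0 ≤ v j) ∧
      ∀ i, ∀ a ∈ A i, β i < a → (∑ j, v j * (e (β i) j - e a j)) < 0 :=
  stmt_9_general e href A β
end
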